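/- arXiv:1201.6429 — 13 statements merged into one kernel-verified Lean document; each statement's English description precedes it below -/
import Mathlib

section
/- For all real numbers β and λ with 0 ≤ β ≤ 1, 0 ≤ λ ≤ 1 and β ≥ 1 − λ, one has (1 + βλ)/(β + λ) ≤ 5/4. (Note that β + λ ≥ 1 > 0, so the ratio is well defined.) -/
/-- For all real numbers β and λ with 0 ≤ β ≤ 1, 0 ≤ λ ≤ 1 and
β ≥ 1 − λ, one has (1 + βλ)/(β + λ) ≤ 5/4. -/
theorem gsp_two_bidders_inefficiency (β lam : ℝ)
    (hβ0 : 0 ≤ β) (hβ1 : β ≤ 1) (hl0 : 0 ≤ lam) (hl1 : lam ≤ 1)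
    (hwf : β ≥ 1 - lam) :
    (1 + β * lam) / (β + lam) ≤ 5 / 4 := by
  have hpos : 0 < β + lam := by linarith
  rw [div_le_div_iff₀ hpos (by norm_num)]
  nlinarith [sq_nonneg (β + lam - 2), sq_nonneg (β - lam), mul_nonneg hβ0 hl0]
end

section
/- For all real numbers β, δ, λ, μ satisfying 1 ≥ β ≥ δ ≥ 0, 1 ≥ λ ≥ μ > 0, β ≥ 1 − μ, and δ ≥ 1 − μ/λ, one has (1 + βλ + δμ)/(μ + β + δλ) ≤ 1 + 2·0.129567 = 1.259134. -/
/-- For all real β, δ, λ, μ with 1 ≥ β ≥ δ ≥ 0, 1 ≥ λ ≥ μ > 0,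
β ≥ 1 − μ and δ ≥ 1 − μ/λ, one has
(1 + βλ + δμ)/(μ + β + δλ) ≤ 1 + 2·0.129567 = 1.259134. -/
theorem gsp_three_bidders_inefficiency (β δ lam mu : ℝ)
    (hβ1 : β ≤ 1) (hβδ : δ ≤ β) (hδ0 : 0 ≤ δ)
    (hl1 : lam ≤ 1) (hlm : mu ≤ lam) (hm0 : 0 < mu)
    (hwf1 : β ≥ 1 - mu) (hwf2 : δ ≥ 1 - mu / lam) :
    (1 + β * lam + δ * mu) / (mu + β + δ * lam) ≤ 1 + 2 * 0.129567 := by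
  have hL : 0 < lam := lt_of_lt_of_le hm0 hlm
  have h2 : lam - mu ≤ δ * lam := by
    have := mul_le_mul_of_nonneg_right hwf2 hL.le
    have he : (1 - mu / lam) * lam = lam - mu := by field_simp
    linarith [he ▸ this]
  have hβ0 : 0 ≤ β := le_trans hδ0 hβδ
  have hden : 0 < mu + β + δ * lam := by nlinarith
  rw [div_le_iff₀ hden]
  have hq : 0 ≤ 4 * (0.259134) * (1 + lam) - lam * (lam - 2.259134)^2 := by
    nlinarith [sq_nonneg (lam - 0.550794), mul_nonneg (sq_nonneg (lam - 0.550794)) hL.le,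
      mul_nonneg (sq_nonneg (lam - 0.550794)) (sub_nonneg.2 hl1)]
  have hA : 0 ≤ lam * ((β - (1 - mu)) * (1.259134 - lam)) := by
    apply mul_nonneg hL.le
    apply mul_nonneg <;> linarith
  have hB : 0 ≤ (δ * lam - (lam - mu)) * (1.259134 * lam - mu) := by
    apply mul_nonneg <;> nlinarith
  nlinarith [hA, hB, sq_nonneg (2 * mu + lam * (lam - 2.259134)), mul_nonneg hL.le hq,
    mul_pos hL hm0]
end

section
/- Let ζ = 0.129567. For every real λ ∈ [0, 1], √(λ³ + 1) ≥ 1 − ζλ + λ²/2. -/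
/-!
Squaring, `λ³ + 1 - (1 - ζλ + λ²/2)² = λ q(λ)` with a cubic `q`. The constant `ζ` is, up to
rounding, the least one for which `q ≥ 0` on `[0, 1]`: `q` almost has a double root at
`λ ≈ 0.550795`, and `q(λ) = (λ - r)² (c - λ/4) + e + f λ` with `r = 0.550795`, `c = 1 + ζ - r/2`
and tiny positive `e`, `f` is an exact certificate.
-/

noncomputable def sqrtCubicGap (z l : ℝ) : ℝ :=
  2 * z - (1 + z ^ 2) * l + (1 + z) * l ^ 2 - l ^ 3 / 4

theorem cube_add_one_sub_sq_eq_mul_sqrtCubicGap (z l : ℝ) :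
    l ^ 3 + 1 - (1 - z * l + l ^ 2 / 2) ^ 2 = l * sqrtCubicGap z l := by
  unfold sqrtCubicGap
  ring

theorem sqrtCubicGap_nonneg {l : ℝ} (h0 : 0 ≤ l) (h1 : l ≤ 1) :
    0 ≤ sqrtCubicGap 0.129567 l := by
  have hcert : sqrtCubicGap 0.129567 l = (l - 0.550795) ^ 2 * (0.8541695 - l / 4)
      + 17213261741 / 80000000000000000 + 3020089 / 4000000000000 * l := by
    unfold sqrtCubicGap
    ring
  have hsq : 0 ≤ (l - 0.550795) ^ 2 * (0.8541695 - l / 4) :=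
    mul_nonneg (sq_nonneg _) (by linarith)
  linarith

/-- Let ζ = 0.129567. For every real λ ∈ [0, 1],
√(λ³ + 1) ≥ 1 − ζλ + λ²/2. -/
theorem sqrt_cubic_lower_bound (lam : ℝ) (h0 : 0 ≤ lam) (h1 : lam ≤ 1) :
    1 - 0.129567 * lam + lam ^ 2 / 2 ≤ Real.sqrt (lam ^ 3 + 1) := by
  apply Real.le_sqrt_of_sq_le
  have hgap := cube_add_one_sub_sq_eq_mul_sqrtCubicGap 0.129567 lam
  have hnonneg := mul_nonneg h0 (sqrtCubicGap_nonneg h0 h1)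
  linarith
end

section
/- Let r = (61 + 7√217)/128. For all real numbers β, δ, λ, μ satisfying β ≥ 1 − μ, δ ≥ 1 − μ/λ, 1 ≥ λ ≥ μ > 0, 0 ≤ β ≤ 1, and 0 ≤ δ ≤ 1, one has μ + β(1 − λ/r) + δ(λ − μ) − 1/r ≥ 0. -/
/-!
The expression is affine in `β` and `δ` with nonnegative coefficients `1 - λ/r` and `λ - μ`, so it
is smallest at `β = 1 - μ`, `δ = 1 - μ/λ`. Multiplying that value by `rλ` gives the polynomial
`rλμ + λ(1 - μ)(r - λ) + r(λ - μ)² - λ`, and since `r` is the positive root of `64r² = 61r + 27`,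
`1372 r` times it equals
`343 (2rμ - 2rλ + λ²)² + λ (7λ - 8r + 6)² (12r + 12 - 7λ)`,
a sum of two terms that are nonnegative for `0 < λ ≤ 1`. Both vanish at `λ = (8r - 6)/7`,
`μ = λ - λ²/(2r)`, which is why this `r` is the best constant.
-/

namespace GSP

noncomputable def inefficiencyBound : ℝ := (61 + 7 * Real.sqrt 217) / 128

lemma inefficiencyBound_quadratic :
    64 * inefficiencyBound ^ 2 = 61 * inefficiencyBound + 27 := by
  have hs : Real.sqrt 217 ^ 2 = 217 := Real.sq_sqrt (by norm_num)
  unfold inefficiencyBound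
  linear_combination (49 / 256 : ℝ) * hs

lemma one_lt_inefficiencyBound : 1 < inefficiencyBound := by
  have h14 : (14 : ℝ) ≤ Real.sqrt 217 :=
    Real.le_sqrt_of_sq_le (by norm_num)
  unfold inefficiencyBound
  linarith

section

variable {r lam : ℝ} (hr : 64 * r ^ 2 = 61 * r + 27) (hr0 : 0 < r) (hl0 : 0 < lam) (hl1 : lam ≤ 1)
include hr hr0 hl0 hl1

lemma cleared_nonneg (mu : ℝ) :
    0 ≤ r * lam * mu + lam * (1 - mu) * (r - lam) + r * (lam - mu) ^ 2 - lam := by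
  have certificate :
      1372 * r * (r * lam * mu + lam * (1 - mu) * (r - lam) + r * (lam - mu) ^ 2 - lam) =
        343 * (2 * r * mu - 2 * r * lam + lam ^ 2) ^ 2
          + lam * (7 * lam - 8 * r + 6) ^ 2 * (12 * r + 12 - 7 * lam) := by
    linear_combination (-12 * r * lam + 16 * lam + 28 * lam ^ 2) * hr
  have hrhs : 0 ≤ 343 * (2 * r * mu - 2 * r * lam + lam ^ 2) ^ 2
      + lam * (7 * lam - 8 * r + 6) ^ 2 * (12 * r + 12 - 7 * lam) := by
    have : 0 ≤ 12 * r + 12 - 7 * lam := by linarith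
    positivity
  rw [← certificate] at hrhs
  exact nonneg_of_mul_nonneg_right (by linarith) (by positivity : (0 : ℝ) < 1372 * r)

lemma extremal_value_nonneg (mu : ℝ) :
    0 ≤ mu + (1 - mu) * (1 - lam / r) + (1 - mu / lam) * (lam - mu) - 1 / r := by
  have expand : mu + (1 - mu) * (1 - lam / r) + (1 - mu / lam) * (lam - mu) - 1 / r
      = (r * lam * mu + lam * (1 - mu) * (r - lam) + r * (lam - mu) ^ 2 - lam) / (r * lam) := by
    field_simp
  rw [expand]
  exact div_nonneg (cleared_nonneg hr hr0 hl0 hl1 mu) (by positivity)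

end

end GSP

open GSP in
theorem gsp_key_optimization_lemma_general (β δ lam mu : ℝ)
    (hwf1 : β ≥ 1 - mu) (hwf2 : δ ≥ 1 - mu / lam)
    (hl1 : lam ≤ 1) (hlm : mu ≤ lam) (hm0 : 0 < mu) :
    0 ≤ mu + β * (1 - lam / ((61 + 7 * Real.sqrt 217) / 128))
        + δ * (lam - mu) - 1 / ((61 + 7 * Real.sqrt 217) / 128) := by
  change 0 ≤ mu + β * (1 - lam / inefficiencyBound) + δ * (lam - mu) - 1 / inefficiencyBound
  have hr1 := one_lt_inefficiencyBound
  have hl0 : 0 < lam := hm0.trans_le hlm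
  have hβcoeff : 0 ≤ 1 - lam / inefficiencyBound := by
    rw [sub_nonneg, div_le_one (by linarith)]
    linarith
  have hβ : (1 - mu) * (1 - lam / inefficiencyBound) ≤ β * (1 - lam / inefficiencyBound) :=
    mul_le_mul_of_nonneg_right hwf1 hβcoeff
  have hδ : (1 - mu / lam) * (lam - mu) ≤ δ * (lam - mu) :=
    mul_le_mul_of_nonneg_right hwf2 (sub_nonneg.mpr hlm)
  have := extremal_value_nonneg inefficiencyBound_quadratic (by linarith) hl0 hl1 mu
  linarith

/-- Let r = (61 + 7√217)/128. For all real β, δ, λ, μ with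
β ≥ 1 − μ, δ ≥ 1 − μ/λ, 1 ≥ λ ≥ μ > 0, 0 ≤ β ≤ 1, 0 ≤ δ ≤ 1, one has
μ + β(1 − λ/r) + δ(λ − μ) − 1/r ≥ 0. -/
theorem gsp_key_optimization_lemma (β δ lam mu : ℝ)
    (hwf1 : β ≥ 1 - mu) (hwf2 : δ ≥ 1 - mu / lam)
    (hl1 : lam ≤ 1) (hlm : mu ≤ lam) (hm0 : 0 < mu)
    (hβ0 : 0 ≤ β) (hβ1 : β ≤ 1) (hδ0 : 0 ≤ δ) (hδ1 : δ ≤ 1) :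
    0 ≤ mu + β * (1 - lam / ((61 + 7 * Real.sqrt 217) / 128))
        + δ * (lam - mu) - 1 / ((61 + 7 * Real.sqrt 217) / 128) :=
  gsp_key_optimization_lemma_general β δ lam mu hwf1 hwf2 hl1 hlm hm0
end

section
/- Let α_1 ≥ … ≥ α_n ≥ 0 and v_1 ≥ … ≥ v_n ≥ 0, and let π be a permutation of {1,…,n} satisfying the weak feasibility conditions α_j v_{π(j)} ≥ α_i (v_{π(j)} − v_{π(i)}) for all i, j. Then the inverse permutation π^{-1} satisfies the weak feasibility conditions of the dual instance in which the roles of click-through-rates and valuations are exchanged, i.e., v_j α_{π^{-1}(j)} ≥ v_i (α_{π^{-1}(j)} − α_{π^{-1}(i)}) for all i, j; moreover Σ_{k=1}^n α_k v_{π(k)} = Σ_{k=1}^n v_k α_{π^{-1}(k)}, i.e., the two allocations have equal social welfare. -/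
def WeaklyFeasible {ι R : Type*} [Mul R] [Sub R] [LE R] (α v : ι → R) (π : Equiv.Perm ι) :
    Prop :=
  ∀ i j, α i * (v (π j) - v (π i)) ≤ α j * v (π j)

-- The dual condition at `(i, j)` is the primal one at `(π⁻¹ j, π⁻¹ i)`, rearranged.
theorem WeaklyFeasible.symm {ι R : Type*} [CommRing R] [PartialOrder R] [IsOrderedAddMonoid R]
    {α v : ι → R} {π : Equiv.Perm ι} (h : WeaklyFeasible α v π) :
    WeaklyFeasible v α π.symm := by
  intro i j
  have primal := h (π.symm j) (π.symm i)
  simp only [Equiv.apply_symm_apply] at primal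
  rw [← sub_nonneg] at primal ⊢
  convert primal using 1
  ring

theorem Equiv.Perm.sum_mul_apply_eq_sum_mul_symm_apply {ι R : Type*} [Fintype ι]
    [CommSemiring R] (α v : ι → R) (π : Equiv.Perm ι) :
    ∑ k, α k * v (π k) = ∑ k, v k * α (π.symm k) := by
  rw [← Equiv.sum_comp π.symm]
  simp only [Equiv.apply_symm_apply, mul_comm]

theorem gsp_duality_general (n : ℕ) (α v : Fin n → ℝ)
    (π : Equiv.Perm (Fin n))
    (hwf : ∀ i j : Fin n, α i * (v (π j) - v (π i)) ≤ α j * v (π j)) :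
    (∀ i j : Fin n, v i * (α (π.symm j) - α (π.symm i)) ≤ v j * α (π.symm j)) ∧
    ∑ k, α k * v (π k) = ∑ k, v k * α (π.symm k) :=
  ⟨WeaklyFeasible.symm hwf, π.sum_mul_apply_eq_sum_mul_symm_apply α v⟩

/-- If π is a weakly feasible allocation for click-through-rates
α_1 ≥ … ≥ α_n ≥ 0 and valuations v_1 ≥ … ≥ v_n ≥ 0, then the inverse
permutation π⁻¹ is weakly feasible for the dual instance in which the roles of
click-through-rates and valuations are exchanged, and the two allocations have
equal social welfare. -/
theorem gsp_duality (n : ℕ) (α v : Fin n → ℝ)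
    (hα : ∀ i j : Fin n, i ≤ j → α j ≤ α i) (hα0 : ∀ i, 0 ≤ α i)
    (hv : ∀ i j : Fin n, i ≤ j → v j ≤ v i) (hv0 : ∀ i, 0 ≤ v i)
    (π : Equiv.Perm (Fin n))
    (hwf : ∀ i j : Fin n, α i * (v (π j) - v (π i)) ≤ α j * v (π j)) :
    (∀ i j : Fin n, v i * (α (π.symm j) - α (π.symm i)) ≤ v j * α (π.symm j)) ∧
    ∑ k, α k * v (π k) = ∑ k, v k * α (π.symm k) :=
  gsp_duality_general n α v π hwf
end

section
/- For every λ > 0 and μ ≥ 0, there exist real numbers α, v, b_1, b_2, b_3, b_4 with 0 < α < 1 and 1 > v > b_2 > b_3 > b_4 > b_1 ≥ 0 such that, in the two-advertiser GSP auction with click-through-rates (1, α) and valuations (1, v), the strategy profiles s = (b_1, b_2) and s* = (b_3, b_4) violate the smoothness inequality: u_1(b_3, b_2) + u_2(b_1, b_4) < λ·SW(s*) − μ·SW(s). Explicitly, α·1 + (v − b_1) < λ(1 + αv) − μ(v + α). Hence the GSP auction game is not (λ, μ)-smooth for any λ > 0, μ ≥ 0. -/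
/-!
Take α = v = ε, b₁ = 0 and the remaining bids in between. The left-hand side (the utilities of
the deviations) is `2ε`, which vanishes as `ε → 0`, while the right-hand side tends to `λ > 0`
because `λ·SW(s*) ≥ λ` and `SW(s) = 2ε`.
-/

open Filter Topology

lemma eventually_lt_smoothness_bound_nhds_zero (lam mu : ℝ) (hlam : 0 < lam) :
    ∀ᶠ ε in 𝓝 (0 : ℝ), 2 * ε < lam * (1 + ε * ε) - mu * (2 * ε) := by
  refine ContinuousAt.eventually_lt (by fun_prop) (by fun_prop) ?_
  simpa using hlam

theorem gsp_not_smooth_general (lam mu : ℝ) (hlam : 0 < lam) :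
    ∃ α v b₁ b₂ b₃ b₄ : ℝ,
      0 < α ∧ α < 1 ∧ v < 1 ∧ b₂ < v ∧ b₃ < b₂ ∧ b₄ < b₃ ∧ b₁ < b₄ ∧ 0 ≤ b₁ ∧
      α * 1 + (v - b₁) < lam * (1 + α * v) - mu * (v + α) := by
  obtain ⟨ε, hgap, hε₀, hε₁⟩ :=
    (((eventually_lt_smoothness_bound_nhds_zero lam mu hlam).filter_mono nhdsWithin_le_nhds).and
      (Ioo_mem_nhdsGT one_pos)).exists
  refine ⟨ε, ε, 0, ε / 2, ε / 4, ε / 8, hε₀, hε₁, hε₁, ?_, ?_, ?_, ?_, le_rfl, ?_⟩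
  all_goals linarith

/-- For every λ > 0 and μ ≥ 0 there exist α, v, b₁, b₂, b₃, b₄
with 0 < α < 1 and 1 > v > b₂ > b₃ > b₄ > b₁ ≥ 0 such that in the
two-advertiser GSP auction with click-through-rates (1, α) and valuations
(1, v), the profiles s = (b₁, b₂) and s* = (b₃, b₄) violate the smoothness
inequality: u₁(b₃, b₂) + u₂(b₁, b₄) = α·1 + (v − b₁) < λ(1 + αv) − μ(v + α).
Hence the GSP auction game is not (λ, μ)-smooth. -/
theorem gsp_not_smooth (lam mu : ℝ) (hlam : 0 < lam) (hmu : 0 ≤ mu) :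
    ∃ α v b₁ b₂ b₃ b₄ : ℝ,
      0 < α ∧ α < 1 ∧ v < 1 ∧ b₂ < v ∧ b₃ < b₂ ∧ b₄ < b₃ ∧ b₁ < b₄ ∧ 0 ≤ b₁ ∧
      α * 1 + (v - b₁) < lam * (1 + α * v) - mu * (v + α) :=
  gsp_not_smooth_general lam mu hlam
end

section
/- Let λ ∈ (0, 1) satisfy 1 − λ + ln(1 − λ) = 0 (numerically λ ≈ 0.4328), and define g : [0,1] → ℝ by g(y) = 1/((1−λ)(1−y)) for y ∈ [0, λ] and g(y) = 0 for y ∈ (λ, 1]. Then: (i) ∫_0^1 g(y) dy = 1; and (ii) for every z ∈ [0, 1], ∫_z^1 (1 − y) g(y) dy ≥ (λ − z)/(1 − λ). In other words, g is a β-bounded function for β = λ/(1 − λ). -/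
open MeasureTheory

/-! The truncated density `g` makes `(1 - y) g(y)` constant, equal to `1 / (1 - λ)`, on `[0, λ]`,
so the tail integral `∫_z^1 (1 - y) g(y) dy` equals `(λ - z) / (1 - λ)` for `z ≤ λ` and vanishes
for `z > λ`. The total mass is `-ln(1 - λ) / (1 - λ)`, which is `1` exactly because `λ` is a root
of `1 - λ + ln(1 - λ) = 0`. -/

open Set Real
open scoped Interval

lemma intervalIntegral_eq_zero_of_eqOn_uIoc {f : ℝ → ℝ} {a b : ℝ} (hf : EqOn f 0 (Ι a b)) :
    ∫ y in a..b, f y = 0 := by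
  rw [intervalIntegral.integral_congr_ae (ae_of_all _ fun _ hy => hf hy)]
  exact intervalIntegral.integral_zero

lemma intervalIntegral_eq_of_eqOn_zero_Ioc {f : ℝ → ℝ} {a b c : ℝ} (hbc : b ≤ c)
    (hf : IntervalIntegrable f volume a b) (hzero : EqOn f 0 (Ioc b c)) :
    ∫ y in a..c, f y = ∫ y in a..b, f y := by
  rw [← uIoc_of_le hbc] at hzero
  have htail : IntervalIntegrable f volume b c :=
    (intervalIntegrable_congr hzero).mpr intervalIntegrable_const
  rw [← intervalIntegral.integral_add_adjacent_intervals hf htail,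
    intervalIntegral_eq_zero_of_eqOn_uIoc hzero, add_zero]

lemma integral_inv_one_sub {a b : ℝ} (ha : a < 1) (hb : b < 1) :
    ∫ y in a..b, (1 - y)⁻¹ = log ((1 - a) / (1 - b)) := by
  rw [intervalIntegral.integral_comp_sub_left (fun x => x⁻¹) 1]
  exact integral_inv_of_pos (by linarith) (by linarith)

section TruncatedDensity

variable {lam : ℝ} {g : ℝ → ℝ}

lemma integral_truncatedDensity (h0 : 0 ≤ lam) (h1 : lam < 1)
    (hg₁ : ∀ y, 0 ≤ y → y ≤ lam → g y = 1 / ((1 - lam) * (1 - y)))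
    (hg₂ : ∀ y, lam < y → y ≤ 1 → g y = 0) :
    ∫ y in (0:ℝ)..1, g y = -log (1 - lam) / (1 - lam) := by
  have hhead : EqOn g (fun y => (1 - lam)⁻¹ * (1 - y)⁻¹) [[0, lam]] := fun y hy => by
    rw [uIcc_of_le h0] at hy
    rw [hg₁ y hy.1 hy.2, one_div, mul_inv]
  have hcont : ContinuousOn (fun y => (1 - lam)⁻¹ * (1 - y)⁻¹) [[0, lam]] := by
    refine continuousOn_const.mul (ContinuousOn.inv₀ (by fun_prop) fun y hy => ?_)
    rw [uIcc_of_le h0] at hy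
    linarith [hy.2]
  have hint : IntervalIntegrable g volume 0 lam :=
    hcont.intervalIntegrable.congr fun y hy => (hhead (uIoc_subset_uIcc hy)).symm
  rw [intervalIntegral_eq_of_eqOn_zero_Ioc h1.le hint fun y hy => hg₂ y hy.1 hy.2,
    intervalIntegral.integral_congr hhead, intervalIntegral.integral_const_mul,
    integral_inv_one_sub one_pos h1, sub_zero, one_div, log_inv, inv_mul_eq_div]

lemma integral_one_sub_mul_truncatedDensity_of_le (h1 : lam < 1)
    (hg₁ : ∀ y, 0 ≤ y → y ≤ lam → g y = 1 / ((1 - lam) * (1 - y)))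
    (hg₂ : ∀ y, lam < y → y ≤ 1 → g y = 0) {z : ℝ} (hz0 : 0 ≤ z) (hzl : z ≤ lam) :
    ∫ y in z..1, (1 - y) * g y = (lam - z) / (1 - lam) := by
  have hhead : EqOn (fun y => (1 - y) * g y) (fun _ => (1 - lam)⁻¹) [[z, lam]] := fun y hy => by
    rw [uIcc_of_le hzl] at hy
    have hy1 : 1 - y ≠ 0 := by linarith [hy.2]
    simp only
    rw [hg₁ y (hz0.trans hy.1) hy.2]
    field_simp
  have hint : IntervalIntegrable (fun y => (1 - y) * g y) volume z lam :=
    intervalIntegrable_const.congr fun y hy => (hhead (uIoc_subset_uIcc hy)).symm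
  rw [intervalIntegral_eq_of_eqOn_zero_Ioc h1.le hint fun y hy => by simp [hg₂ y hy.1 hy.2],
    intervalIntegral.integral_congr hhead, intervalIntegral.integral_const, smul_eq_mul,
    div_eq_mul_inv]

lemma integral_one_sub_mul_truncatedDensity_of_lt (hg₂ : ∀ y, lam < y → y ≤ 1 → g y = 0)
    {z : ℝ} (hlz : lam < z) (hz1 : z ≤ 1) :
    ∫ y in z..1, (1 - y) * g y = 0 := by
  refine intervalIntegral_eq_zero_of_eqOn_uIoc fun y hy => ?_
  rw [uIoc_of_le hz1] at hy
  simp [hg₂ y (hlz.trans hy.1) hy.2]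

end TruncatedDensity

/-- Let λ ∈ (0,1) satisfy 1 − λ + ln(1 − λ) = 0, and let
g(y) = 1/((1−λ)(1−y)) for y ∈ [0, λ] and g(y) = 0 for y ∈ (λ, 1].
Then ∫₀¹ g = 1 and for every z ∈ [0,1], ∫_z¹ (1 − y) g(y) dy ≥ (λ − z)/(1 − λ);
i.e. g is a β-bounded function for β = λ/(1−λ). -/
theorem gsp_beta_bounded_function (lam : ℝ) (h0 : 0 < lam) (h1 : lam < 1)
    (hroot : 1 - lam + Real.log (1 - lam) = 0)
    (g : ℝ → ℝ)
    (hg₁ : ∀ y : ℝ, 0 ≤ y → y ≤ lam → g y = 1 / ((1 - lam) * (1 - y)))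
    (hg₂ : ∀ y : ℝ, lam < y → y ≤ 1 → g y = 0) :
    (∫ y in (0:ℝ)..1, g y) = 1 ∧
    ∀ z : ℝ, 0 ≤ z → z ≤ 1 →
      (lam - z) / (1 - lam) ≤ ∫ y in z..(1:ℝ), (1 - y) * g y := by
  have hlam : 0 < 1 - lam := by linarith
  refine ⟨?_, fun z hz0 hz1 => ?_⟩
  · rw [integral_truncatedDensity h0.le h1 hg₁ hg₂, show -log (1 - lam) = 1 - lam by linarith,
      div_self hlam.ne']
  · rcases le_or_gt z lam with hzl | hlz
    · exact (integral_one_sub_mul_truncatedDensity_of_le h1 hg₁ hg₂ hz0 hzl).ge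
    · rw [integral_one_sub_mul_truncatedDensity_of_lt hg₂ hlz hz1]
      exact div_nonpos_of_nonpos_of_nonneg (by linarith) hlam.le
end

section
/- Let κ > 1 and 0 ≤ λ ≤ μ < 1 satisfy (κ−1)(μ−λ)/(1−λ) − κ·ln(1−λ) ≤ 1 and (κ−1)(1−μ)·ln((1−λ)/(1−μ)) − (κ−1)μ + κλ ≥ 0. Define g : [0,1] → ℝ by g(y) = κ/(1−y) for y ∈ [0, λ), g(y) = (κ−1)(1−μ)/(1−y)² for y ∈ [λ, μ), and g(y) = 0 for y ∈ [μ, 1]. Then g is ((κ−1)μ, κ−1)-bounded, i.e.: (i) ∫_0^1 g(y) dy ≤ 1; (ii) for all z ∈ [0,1], (1 − z) ∫_z^1 g(y) dy ≥ (κ−1)μ − (κ−1)z; and (iii) for all z ∈ [0,1], ∫_z^1 (1 − y) g(y) dy ≥ (κ−1)μ − κz. -/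
/-!
The integrals have closed forms on each piece. For `z ≤ λ`,
`∫_z^1 g = κ log((1-z)/(1-λ)) + (κ-1)(μ-λ)/(1-λ)` and
`∫_z^1 (1-y) g = κ(λ-z) + (κ-1)(1-μ) log((1-λ)/(1-μ))`; for `λ ≤ z ≤ μ` they are
`(κ-1)(μ-z)/(1-z)` and `(κ-1)(1-μ) log((1-z)/(1-μ))`; from `μ` on both vanish.
So (i) is the first hypothesis, (ii) is an equality on `[λ, μ]`, and (iii) at `z ≤ λ` is the
second hypothesis. The remaining cases reduce to these through `log x ≥ 1 - 1/x`, in the form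
`(1 - z) log((1-z)/(1-λ)) ≥ λ - z`.
-/

open MeasureTheory Real Set intervalIntegral

theorem one_sub_pos_of_mem_uIcc {a b y : ℝ} (ha : a < 1) (hb : b < 1) (hy : y ∈ uIcc a b) :
    0 < 1 - y :=
  sub_pos.2 (hy.2.trans_lt (max_lt ha hb))

theorem intervalIntegrable_div_one_sub (c : ℝ) {a b : ℝ} (ha : a < 1) (hb : b < 1) :
    IntervalIntegrable (fun y => c / (1 - y)) volume a b :=
  ContinuousOn.intervalIntegrable <| continuousOn_const.div (by fun_prop)
    fun _ hy => (one_sub_pos_of_mem_uIcc ha hb hy).ne'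

theorem intervalIntegrable_div_one_sub_sq (c : ℝ) {a b : ℝ} (ha : a < 1) (hb : b < 1) :
    IntervalIntegrable (fun y => c / (1 - y) ^ 2) volume a b :=
  ContinuousOn.intervalIntegrable <| continuousOn_const.div (by fun_prop)
    fun _ hy => pow_ne_zero 2 (one_sub_pos_of_mem_uIcc ha hb hy).ne'

theorem integral_div_one_sub (c : ℝ) {a b : ℝ} (ha : a < 1) (hb : b < 1) :
    ∫ y in a..b, c / (1 - y) = c * log ((1 - a) / (1 - b)) := by
  simp only [div_eq_mul_inv c, intervalIntegral.integral_const_mul]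
  rw [integral_comp_sub_left (fun x => x⁻¹) 1, integral_inv]
  exact fun h => (lt_min (sub_pos.2 hb) (sub_pos.2 ha)).not_ge h.1

theorem integral_div_one_sub_sq (c : ℝ) {a b : ℝ} (ha : a < 1) (hb : b < 1) :
    ∫ y in a..b, c / (1 - y) ^ 2 = c / (1 - b) - c / (1 - a) := by
  refine integral_eq_sub_of_hasDerivAt (f := fun y => c / (1 - y)) (fun y hy => ?_)
    (intervalIntegrable_div_one_sub_sq c ha hb)
  simpa [div_eq_mul_inv] using
    (((hasDerivAt_id' y).const_sub 1).fun_inv (one_sub_pos_of_mem_uIcc ha hb hy).ne').const_mul c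

theorem integral_eq_add_of_eqOn_Ioo {E : Type*} [NormedAddCommGroup E] [NormedSpace ℝ E]
    {μ : Measure ℝ} [NullSingletonClass μ] {f f₁ f₂ : ℝ → E} {a b c d : ℝ}
    (hab : a ≤ b) (hbc : b ≤ c) (hcd : c ≤ d)
    (h₁ : EqOn f f₁ (Ioo a b)) (h₂ : EqOn f f₂ (Ioo b c)) (h₃ : EqOn f 0 (Ioo c d))
    (hf₁ : IntervalIntegrable f₁ μ a b) (hf₂ : IntervalIntegrable f₂ μ b c) :
    ∫ x in a..d, f x ∂μ = (∫ x in a..b, f₁ x ∂μ) + ∫ x in b..c, f₂ x ∂μ := by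
  have i₁ : IntervalIntegrable f μ a b := hf₁.congr_uIoo (uIoo_of_le hab ▸ h₁.symm)
  have i₂ : IntervalIntegrable f μ b c := hf₂.congr_uIoo (uIoo_of_le hbc ▸ h₂.symm)
  have i₃ : IntervalIntegrable f μ c d :=
    IntervalIntegrable.zero.congr_uIoo (uIoo_of_le hcd ▸ h₃.symm)
  rw [← integral_add_adjacent_intervals (i₁.trans i₂) i₃, ← integral_add_adjacent_intervals i₁ i₂,
    integral_congr_Ioo_of_le hab h₁, integral_congr_Ioo_of_le hbc h₂,
    integral_congr_Ioo_of_le hcd h₃]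
  simp

theorem sub_le_one_sub_mul_log_div {a z : ℝ} (ha : a < 1) (hz : z < 1) :
    a - z ≤ (1 - z) * log ((1 - z) / (1 - a)) := by
  have h1z : 0 < 1 - z := sub_pos.2 hz
  have h1a : 0 < 1 - a := sub_pos.2 ha
  calc a - z = (1 - z) * (1 - ((1 - z) / (1 - a))⁻¹) := by field_simp; ring
    _ ≤ (1 - z) * log ((1 - z) / (1 - a)) :=
      mul_le_mul_of_nonneg_left (one_sub_inv_le_log_of_pos (div_pos h1z h1a)) h1z.le

noncomputable def gspDensity (κ lam mu y : ℝ) : ℝ :=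
  if y < lam then κ / (1 - y) else if y < mu then (κ - 1) * (1 - mu) / (1 - y) ^ 2 else 0

section gspDensity

variable {κ lam mu y : ℝ}

theorem gspDensity_of_lt (hy : y < lam) : gspDensity κ lam mu y = κ / (1 - y) :=
  if_pos hy

theorem gspDensity_of_mem_Ico (hy : y ∈ Ico lam mu) :
    gspDensity κ lam mu y = (κ - 1) * (1 - mu) / (1 - y) ^ 2 := by
  simp [gspDensity, not_lt.2 hy.1, hy.2]

theorem gspDensity_of_le (hlm : lam ≤ mu) (hy : mu ≤ y) : gspDensity κ lam mu y = 0 := by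
  simp [gspDensity, not_lt.2 (hlm.trans hy), not_lt.2 hy]

theorem one_sub_mul_gspDensity_of_lt (hl1 : lam < 1) (hy : y < lam) :
    (1 - y) * gspDensity κ lam mu y = κ := by
  have : 1 - y ≠ 0 := by linarith
  rw [gspDensity_of_lt hy]
  field_simp

theorem one_sub_mul_gspDensity_of_mem_Ico (hm1 : mu ≤ 1) (hy : y ∈ Ico lam mu) :
    (1 - y) * gspDensity κ lam mu y = (κ - 1) * (1 - mu) / (1 - y) := by
  have : 1 - y ≠ 0 := by linarith [hy.2]
  rw [gspDensity_of_mem_Ico hy]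
  field_simp

theorem eqOn_gspDensity {g : ℝ → ℝ}
    (hg₁ : ∀ y : ℝ, 0 ≤ y → y < lam → g y = κ / (1 - y))
    (hg₂ : ∀ y : ℝ, lam ≤ y → y < mu → g y = (κ - 1) * (1 - mu) / (1 - y) ^ 2)
    (hg₃ : ∀ y : ℝ, mu ≤ y → y ≤ 1 → g y = 0) :
    EqOn g (gspDensity κ lam mu) (Icc 0 1) := by
  intro y hy
  unfold gspDensity
  split_ifs with h₁ h₂
  exacts [hg₁ y hy.1 h₁, hg₂ y (not_lt.1 h₁) h₂, hg₃ y (not_lt.1 h₂) hy.2]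

variable {z : ℝ}

theorem integral_gspDensity_of_le_lam (hlm : lam ≤ mu) (hm1 : mu < 1) (hz : z ≤ lam) :
    ∫ y in z..1, gspDensity κ lam mu y
      = κ * log ((1 - z) / (1 - lam)) + (κ - 1) * (mu - lam) / (1 - lam) := by
  have hl1 := hlm.trans_lt hm1
  rw [integral_eq_add_of_eqOn_Ioo hz hlm hm1.le (fun y hy => gspDensity_of_lt hy.2)
    (fun y hy => gspDensity_of_mem_Ico (Ioo_subset_Ico_self hy))
    (fun y hy => gspDensity_of_le hlm hy.1.le) (intervalIntegrable_div_one_sub κ (hz.trans_lt hl1) hl1)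
    (intervalIntegrable_div_one_sub_sq _ hl1 hm1),
    integral_div_one_sub _ (hz.trans_lt hl1) hl1, integral_div_one_sub_sq _ hl1 hm1]
  have : 1 - mu ≠ 0 := by linarith
  have : 1 - lam ≠ 0 := by linarith
  field_simp
  ring

theorem integral_gspDensity_of_mem_Icc (hm1 : mu < 1) (hz : z ∈ Icc lam mu) :
    ∫ y in z..1, gspDensity κ lam mu y = (κ - 1) * (mu - z) / (1 - z) := by
  have hz1 := hz.2.trans_lt hm1
  rw [integral_eq_add_of_eqOn_Ioo le_rfl hz.2 hm1.le (f₁ := 0) (by simp)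
    (fun y hy => gspDensity_of_mem_Ico ⟨hz.1.trans hy.1.le, hy.2⟩)
    (fun y hy => gspDensity_of_le (hz.1.trans hz.2) hy.1.le) IntervalIntegrable.refl
    (intervalIntegrable_div_one_sub_sq _ hz1 hm1), integral_same, integral_div_one_sub_sq _ hz1 hm1]
  have : 1 - mu ≠ 0 := by linarith
  have : 1 - z ≠ 0 := by linarith
  field_simp
  ring

theorem integral_gspDensity_of_mu_le (hlm : lam ≤ mu) (hm1 : mu ≤ 1) (hz : mu ≤ z) :
    ∫ y in z..1, gspDensity κ lam mu y = 0 := by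
  rw [integral_congr (g := 0) fun y hy => gspDensity_of_le hlm (le_min hz hm1 |>.trans hy.1)]
  simp

theorem integral_one_sub_mul_gspDensity_of_le_lam (hlm : lam ≤ mu) (hm1 : mu < 1) (hz : z ≤ lam) :
    ∫ y in z..1, (1 - y) * gspDensity κ lam mu y
      = κ * (lam - z) + (κ - 1) * (1 - mu) * log ((1 - lam) / (1 - mu)) := by
  have hl1 := hlm.trans_lt hm1
  rw [integral_eq_add_of_eqOn_Ioo hz hlm hm1.le (f₁ := fun _ => κ)
    (fun y hy => one_sub_mul_gspDensity_of_lt hl1 hy.2)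
    (fun y hy => one_sub_mul_gspDensity_of_mem_Ico hm1.le (Ioo_subset_Ico_self hy))
    (fun y hy => by simp [gspDensity_of_le hlm hy.1.le]) intervalIntegrable_const
    (intervalIntegrable_div_one_sub _ hl1 hm1), intervalIntegral.integral_const, integral_div_one_sub _ hl1 hm1,
    smul_eq_mul]
  ring

theorem integral_one_sub_mul_gspDensity_of_mem_Icc (hm1 : mu < 1) (hz : z ∈ Icc lam mu) :
    ∫ y in z..1, (1 - y) * gspDensity κ lam mu y
      = (κ - 1) * (1 - mu) * log ((1 - z) / (1 - mu)) := by
  have hz1 := hz.2.trans_lt hm1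
  rw [integral_eq_add_of_eqOn_Ioo le_rfl hz.2 hm1.le (f₁ := 0) (by simp)
    (fun y hy => one_sub_mul_gspDensity_of_mem_Ico hm1.le ⟨hz.1.trans hy.1.le, hy.2⟩)
    (fun y hy => by simp [gspDensity_of_le (hz.1.trans hz.2) hy.1.le]) IntervalIntegrable.refl
    (intervalIntegrable_div_one_sub _ hz1 hm1), integral_same, integral_div_one_sub _ hz1 hm1,
    zero_add]

theorem integral_one_sub_mul_gspDensity_of_mu_le (hlm : lam ≤ mu) (hm1 : mu ≤ 1) (hz : mu ≤ z) :
    ∫ y in z..1, (1 - y) * gspDensity κ lam mu y = 0 := by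
  rw [integral_congr (g := 0) fun y hy => by
    simp [gspDensity_of_le hlm (le_min hz hm1 |>.trans hy.1)]]
  simp

theorem integral_gspDensity_le_one (hl0 : 0 ≤ lam) (hlm : lam ≤ mu) (hm1 : mu < 1)
    (hc1 : (κ - 1) * (mu - lam) / (1 - lam) - κ * Real.log (1 - lam) ≤ 1) :
    ∫ y in (0 : ℝ)..1, gspDensity κ lam mu y ≤ 1 := by
  rw [integral_gspDensity_of_le_lam hlm hm1 hl0, sub_zero, one_div, log_inv]
  linarith

theorem sub_mul_le_one_sub_mul_integral_gspDensity (hκ : 1 ≤ κ) (hlm : lam ≤ mu) (hm1 : mu < 1)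
    (z : ℝ) : (κ - 1) * mu - (κ - 1) * z ≤ (1 - z) * ∫ y in z..1, gspDensity κ lam mu y := by
  have hl1 := hlm.trans_lt hm1
  rcases le_or_gt z lam with hzl | hlz
  · rw [integral_gspDensity_of_le_lam hlm hm1 hzl]
    have hlog : κ * (lam - z) ≤ (1 - z) * (κ * log ((1 - z) / (1 - lam))) := by
      have := mul_le_mul_of_nonneg_left (sub_le_one_sub_mul_log_div hl1 (hzl.trans_lt hl1))
        (by linarith : 0 ≤ κ)
      linarith
    have hfrac : (κ - 1) * (mu - lam) ≤ (1 - z) * ((κ - 1) * (mu - lam) / (1 - lam)) := by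
      rw [mul_div_assoc', le_div_iff₀ (by linarith)]
      nlinarith [mul_nonneg (mul_nonneg (sub_nonneg.2 hκ) (sub_nonneg.2 hlm)) (sub_nonneg.2 hzl)]
    linarith
  rcases le_or_gt z mu with hzm | hmz
  · rw [integral_gspDensity_of_mem_Icc hm1 ⟨hlz.le, hzm⟩, mul_div_cancel₀ _ (by linarith)]
    exact le_of_eq (by ring)
  · rw [integral_gspDensity_of_mu_le hlm hm1.le hmz.le, mul_zero]
    nlinarith

theorem sub_mul_le_integral_one_sub_mul_gspDensity (hκ : 1 ≤ κ) (hl0 : 0 ≤ lam) (hlm : lam ≤ mu)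
    (hm1 : mu < 1)
    (hc2 : 0 ≤ (κ - 1) * (1 - mu) * Real.log ((1 - lam) / (1 - mu))
            - (κ - 1) * mu + κ * lam)
    (z : ℝ) : (κ - 1) * mu - κ * z ≤ ∫ y in z..1, (1 - y) * gspDensity κ lam mu y := by
  have hl1 := hlm.trans_lt hm1
  rcases le_or_gt z lam with hzl | hlz
  · rw [integral_one_sub_mul_gspDensity_of_le_lam hlm hm1 hzl]
    linarith
  rcases le_or_gt z mu with hzm | hmz
  · rw [integral_one_sub_mul_gspDensity_of_mem_Icc hm1 ⟨hlz.le, hzm⟩]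
    have h1z : 0 < 1 - z := by linarith
    have hc : 0 ≤ (κ - 1) * (1 - mu) := mul_nonneg (by linarith) (by linarith)
    have hsplit : log ((1 - z) / (1 - mu))
        = log ((1 - z) / (1 - lam)) + log ((1 - lam) / (1 - mu)) := by
      rw [← log_mul (by positivity) (by positivity), div_mul_div_cancel₀ (by linarith)]
    have hlog : κ * (lam - z) ≤ (κ - 1) * (1 - mu) * log ((1 - z) / (1 - lam)) := by
      refine le_of_mul_le_mul_left ?_ h1z
      nlinarith [mul_le_mul_of_nonneg_left (sub_le_one_sub_mul_log_div hl1 (sub_pos.1 h1z)) hc,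
        mul_nonneg (by nlinarith : 0 ≤ κ * (1 - z) - (κ - 1) * (1 - mu)) (sub_nonneg.2 hlz.le)]
    rw [hsplit]
    linarith
  · rw [integral_one_sub_mul_gspDensity_of_mu_le hlm hm1.le hmz.le]
    nlinarith

end gspDensity

/-- Let κ > 1 and 0 ≤ λ ≤ μ < 1 satisfy
(κ−1)(μ−λ)/(1−λ) − κ·ln(1−λ) ≤ 1 and
(κ−1)(1−μ)·ln((1−λ)/(1−μ)) − (κ−1)μ + κλ ≥ 0.
Define g(y) = κ/(1−y) on [0, λ), g(y) = (κ−1)(1−μ)/(1−y)² on [λ, μ), and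
g(y) = 0 on [μ, 1]. Then g is ((κ−1)μ, κ−1)-bounded:
(i) ∫₀¹ g ≤ 1; (ii) (1 − z)∫_z¹ g ≥ (κ−1)μ − (κ−1)z for all z ∈ [0,1];
(iii) ∫_z¹ (1 − y) g(y) dy ≥ (κ−1)μ − κz for all z ∈ [0,1]. -/
theorem gsp_beta_delta_bounded_function (κ lam mu : ℝ)
    (hκ : 1 < κ) (hl0 : 0 ≤ lam) (hlm : lam ≤ mu) (hm1 : mu < 1)
    (hc1 : (κ - 1) * (mu - lam) / (1 - lam) - κ * Real.log (1 - lam) ≤ 1)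
    (hc2 : 0 ≤ (κ - 1) * (1 - mu) * Real.log ((1 - lam) / (1 - mu))
            - (κ - 1) * mu + κ * lam)
    (g : ℝ → ℝ)
    (hg₁ : ∀ y : ℝ, 0 ≤ y → y < lam → g y = κ / (1 - y))
    (hg₂ : ∀ y : ℝ, lam ≤ y → y < mu → g y = (κ - 1) * (1 - mu) / (1 - y) ^ 2)
    (hg₃ : ∀ y : ℝ, mu ≤ y → y ≤ 1 → g y = 0) :
    (∫ y in (0:ℝ)..1, g y) ≤ 1 ∧
    (∀ z : ℝ, 0 ≤ z → z ≤ 1 →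
      (κ - 1) * mu - (κ - 1) * z ≤ (1 - z) * ∫ y in z..(1:ℝ), g y) ∧
    (∀ z : ℝ, 0 ≤ z → z ≤ 1 →
      (κ - 1) * mu - κ * z ≤ ∫ y in z..(1:ℝ), (1 - y) * g y) := by
  have hg : ∀ z ∈ Icc (0 : ℝ) 1, EqOn g (gspDensity κ lam mu) (uIcc z 1) := fun z hz =>
    (eqOn_gspDensity hg₁ hg₂ hg₃).mono (by rw [uIcc_of_le hz.2]; exact Icc_subset_Icc_left hz.1)
  refine ⟨?_, fun z hz0 hz1 => ?_, fun z hz0 hz1 => ?_⟩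
  · rw [integral_congr (hg 0 ⟨le_rfl, zero_le_one⟩)]
    exact integral_gspDensity_le_one hl0 hlm hm1 hc1
  · rw [integral_congr (hg z ⟨hz0, hz1⟩)]
    exact sub_mul_le_one_sub_mul_integral_gspDensity hκ.le hlm hm1 z
  · rw [integral_congr fun y hy => congrArg ((1 - y) * ·) (hg z ⟨hz0, hz1⟩ hy)]
    exact sub_mul_le_integral_one_sub_mul_gspDensity hκ.le hl0 hlm hm1 hc2 z
end

section
/- Let N be a finite set of players, each with a nonempty strategy set S_i, utilities U_i : Π_j S_j → ℝ, a social welfare function SW : Π_j S_j → ℝ, a real number SW*, and constants λ, μ ≥ 0. Suppose: (a) Σ_{i∈N} U_i(s) ≤ SW(s) for every strategy profile s; and (b) there exists a profile s' = (s'_i) such that Σ_{i∈N} U_i(s'_i, s_{-i}) ≥ λ·SW* − μ·SW(s) for every profile s (semi-smoothness). Then for every pure Nash equilibrium s (i.e., U_i(s) ≥ U_i(t_i, s_{-i}) for all i and all t_i ∈ S_i), one has λ·SW* ≤ (μ + 1)·SW(s). -/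
lemma sum_update_le_sum_of_forall_update_le {N : Type*} [Fintype N] [DecidableEq N] {S : N → Type*}
    {U : N → (∀ j, S j) → ℝ} {s : ∀ j, S j}
    (hNE : ∀ (i : N) (t : S i), U i (Function.update s i t) ≤ U i s) (s' : ∀ j, S j) :
    ∑ i, U i (Function.update s i (s' i)) ≤ ∑ i, U i s :=
  Finset.sum_le_sum fun i _ => hNE i (s' i)

theorem semi_smooth_pure_poa_general {N : Type*} [Fintype N] [DecidableEq N]
    {S : N → Type*}
    (U : ∀ _ : N, (∀ j, S j) → ℝ) (SW : (∀ j, S j) → ℝ)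
    (SWstar lam mu : ℝ)
    (hsum : ∀ s, ∑ i, U i s ≤ SW s)
    (s' : ∀ j, S j)
    (hsmooth : ∀ s : ∀ j, S j,
      lam * SWstar - mu * SW s ≤ ∑ i, U i (Function.update s i (s' i)))
    (s : ∀ j, S j)
    (hNE : ∀ (i : N) (t : S i), U i (Function.update s i t) ≤ U i s) :
    lam * SWstar ≤ (mu + 1) * SW s := by
  have hsmooth_at_s : lam * SWstar - mu * SW s ≤ SW s :=
    calc lam * SWstar - mu * SW s
        ≤ ∑ i, U i (Function.update s i (s' i)) := hsmooth s
      _ ≤ ∑ i, U i s := sum_update_le_sum_of_forall_update_le hNE s'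
      _ ≤ SW s := hsum s
  linarith

/-- In a finite game whose social welfare is at least the sum of
the players' utilities, if there is a profile s' witnessing
(λ, μ)-semi-smoothness, then every pure Nash equilibrium s satisfies
λ·SW* ≤ (μ + 1)·SW(s). -/
theorem semi_smooth_pure_poa {N : Type*} [Fintype N] [DecidableEq N]
    {S : N → Type*} [∀ i, Nonempty (S i)]
    (U : ∀ _ : N, (∀ j, S j) → ℝ) (SW : (∀ j, S j) → ℝ)
    (SWstar lam mu : ℝ) (hlam : 0 ≤ lam) (hmu : 0 ≤ mu)
    (hsum : ∀ s, ∑ i, U i s ≤ SW s)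
    (s' : ∀ j, S j)
    (hsmooth : ∀ s : ∀ j, S j,
      lam * SWstar - mu * SW s ≤ ∑ i, U i (Function.update s i (s' i)))
    (s : ∀ j, S j)
    (hNE : ∀ (i : N) (t : S i), U i (Function.update s i t) ≤ U i s) :
    lam * SWstar ≤ (mu + 1) * SW s :=
  semi_smooth_pure_poa_general U SW SWstar lam mu hsum s' hsmooth s hNE
end

section
/- Let N be a finite set of players, each with a finite type set T_i and a nonempty strategy set S_i. Let q be a probability distribution (possibly correlated) over the product type space T = Π_i T_i. Let U_i : T × Π_j S_j → ℝ be utilities, SW : T × Π_j S_j → ℝ a social welfare function, SW* : T → ℝ, and λ, μ ≥ 0. Suppose: (a) Σ_i U_i(t, s) ≤ SW(t, s) for all t and s; and (b) there exist deviation maps s'_i : T_i → S_i such that for all t ∈ T and all profiles s, Σ_i U_i(t, (s'_i(t_i), s_{-i})) ≥ λ·SW*(t) − μ·SW(t, s). Let b = (b_i) with b_i : T_i → S_i be a strategy profile such that for every i and every map b'_i : T_i → S_i, E_{t∼q}[U_i(t, b(t))] ≥ E_{t∼q}[U_i(t, (b'_i(t_i), b_{-i}(t_{-i})))]. Then λ·E_{t∼q}[SW*(t)]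 ≤ (μ + 1)·E_{t∼q}[SW(t, b(t))]. -/
/-! Take expectations of the ex-post semi-smoothness inequality at the equilibrium profile `b(t)`.
Each player's deviation `s'_i` depends only on her own type, so it is an admissible Bayesian
deviation and the equilibrium condition bounds its expected utility by that of `b_i`. Summing over
players and using `Σ_i U_i ≤ SW` gives `λ·E[SW*] - μ·E[SW(b)] ≤ E[SW(b)]`. -/

open Finset

section BayesianGame

variable {N : Type*} [Fintype N] [DecidableEq N] {T : N → Type*} [∀ i, Fintype (T i)]
  {S : N → Type*} {q : (∀ i, T i) → ℝ}

theorem sum_weighted_sum_comm (q : (∀ i, T i) → ℝ) (f : N → (∀ i, T i) → ℝ) :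
    ∑ t, q t * ∑ i, f i t = ∑ i, ∑ t, q t * f i t := by
  simp_rw [mul_sum]
  exact sum_comm

theorem semiSmooth_in_expectation (hq0 : ∀ t, 0 ≤ q t) {U : N → (∀ j, T j) → (∀ j, S j) → ℝ}
    {SW : (∀ j, T j) → (∀ j, S j) → ℝ} {SWstar : (∀ j, T j) → ℝ} {lam mu : ℝ}
    {s' : ∀ i, T i → S i}
    (hsmooth : ∀ (t : ∀ j, T j) (s : ∀ j, S j),
      lam * SWstar t - mu * SW t s ≤ ∑ i, U i t (Function.update s i (s' i (t i))))
    (σ : (∀ j, T j) → ∀ j, S j) :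
    lam * ∑ t, q t * SWstar t - mu * ∑ t, q t * SW t (σ t) ≤
      ∑ i, ∑ t, q t * U i t (Function.update (σ t) i (s' i (t i))) :=
  calc lam * ∑ t, q t * SWstar t - mu * ∑ t, q t * SW t (σ t)
      = ∑ t, q t * (lam * SWstar t - mu * SW t (σ t)) := by
        simp_rw [mul_sum, ← sum_sub_distrib]
        exact sum_congr rfl fun t _ => by ring
    _ ≤ ∑ t, q t * ∑ i, U i t (Function.update (σ t) i (s' i (t i))) := by
        gcongr with t
        exacts [hq0 t, hsmooth t (σ t)]
    _ = _ := sum_weighted_sum_comm q _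

theorem sum_expected_utility_le_expected_welfare (hq0 : ∀ t, 0 ≤ q t)
    {U : N → (∀ j, T j) → (∀ j, S j) → ℝ} {SW : (∀ j, T j) → (∀ j, S j) → ℝ}
    (hsum : ∀ t s, ∑ i, U i t s ≤ SW t s) (σ : (∀ j, T j) → ∀ j, S j) :
    ∑ i, ∑ t, q t * U i t (σ t) ≤ ∑ t, q t * SW t (σ t) :=
  calc ∑ i, ∑ t, q t * U i t (σ t) = ∑ t, q t * ∑ i, U i t (σ t) :=
        (sum_weighted_sum_comm q _).symm
    _ ≤ ∑ t, q t * SW t (σ t) := by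
        gcongr with t
        exacts [hq0 t, hsum t (σ t)]

end BayesianGame

theorem semi_smooth_bayesian_poa_general {N : Type*} [Fintype N] [DecidableEq N]
    {T : N → Type*} [∀ i, Fintype (T i)]
    {S : N → Type*}
    (q : (∀ i, T i) → ℝ) (hq0 : ∀ t, 0 ≤ q t)
    (U : ∀ _ : N, (∀ j, T j) → (∀ j, S j) → ℝ)
    (SW : (∀ j, T j) → (∀ j, S j) → ℝ) (SWstar : (∀ j, T j) → ℝ)
    (lam mu : ℝ)
    (hsum : ∀ t s, ∑ i, U i t s ≤ SW t s)
    (s' : ∀ i, T i → S i)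
    (hsmooth : ∀ (t : ∀ j, T j) (s : ∀ j, S j),
      lam * SWstar t - mu * SW t s ≤
        ∑ i, U i t (Function.update s i (s' i (t i))))
    (b : ∀ i, T i → S i)
    (hBNE : ∀ (i : N) (b' : T i → S i),
      ∑ t, q t * U i t (Function.update (fun j => b j (t j)) i (b' (t i))) ≤
      ∑ t, q t * U i t (fun j => b j (t j))) :
    lam * ∑ t, q t * SWstar t ≤
      (mu + 1) * ∑ t, q t * SW t (fun j => b j (t j)) := by
  have hdeviate := semiSmooth_in_expectation hq0 hsmooth fun t j => b j (t j)
  have hequilibrium := sum_le_sum fun i (_ : i ∈ univ) => hBNE i (s' i)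
  have hwelfare := sum_expected_utility_le_expected_welfare hq0 hsum fun t j => b j (t j)
  linarith

/-- Bayesian semi-smoothness lemma. In a finite-type Bayesian
game with a (possibly correlated) prior q over the product type space, whose
social welfare is at least the sum of utilities, if there are deviation maps
s'_i : T_i → S_i witnessing (λ, μ)-semi-smoothness ex post, then every
strategy profile b that is a Bayes-Nash equilibrium (no unilateral deviation
map improves expected utility) satisfies
λ·E[SW*(t)] ≤ (μ + 1)·E[SW(t, b(t))]. -/
theorem semi_smooth_bayesian_poa {N : Type*} [Fintype N] [DecidableEq N]
    {T : N → Type*} [∀ i, Fintype (T i)]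
    {S : N → Type*} [∀ i, Nonempty (S i)]
    (q : (∀ i, T i) → ℝ) (hq0 : ∀ t, 0 ≤ q t) (hq1 : ∑ t, q t = 1)
    (U : ∀ _ : N, (∀ j, T j) → (∀ j, S j) → ℝ)
    (SW : (∀ j, T j) → (∀ j, S j) → ℝ) (SWstar : (∀ j, T j) → ℝ)
    (lam mu : ℝ) (hlam : 0 ≤ lam) (hmu : 0 ≤ mu)
    (hsum : ∀ t s, ∑ i, U i t s ≤ SW t s)
    (s' : ∀ i, T i → S i)
    (hsmooth : ∀ (t : ∀ j, T j) (s : ∀ j, S j),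
      lam * SWstar t - mu * SW t s ≤
        ∑ i, U i t (Function.update s i (s' i (t i))))
    (b : ∀ i, T i → S i)
    (hBNE : ∀ (i : N) (b' : T i → S i),
      ∑ t, q t * U i t (Function.update (fun j => b j (t j)) i (b' (t i))) ≤
      ∑ t, q t * U i t (fun j => b j (t j))) :
    lam * ∑ t, q t * SWstar t ≤
      (mu + 1) * ∑ t, q t * SW t (fun j => b j (t j)) :=
  semi_smooth_bayesian_poa_general q hq0 U SW SWstar lam mu hsum s' hsmooth b hBNE
end

section
/- Consider a GSP auction with n slots of click-through-rates α_1 ≥ … ≥ α_n ≥ 0, quality factors γ_i > 0, and valuations v_i ≥ 0 indexed so that γ_1 v_1 ≥ γ_2 v_2 ≥ … ≥ γ_n v_n. Let b be any conservative bid profile (0 ≤ b_j ≤ v_j for all j) and let π be a GSP allocation for (b, γ), i.e., a permutation with γ_{π(1)} b_{π(1)} ≥ … ≥ γ_{π(n)} b_{π(n)}. For each player i let u_i^{dev} denote i's utility when i unilaterally deviates to the bid v_i/2, computed with respect to any GSP allocation of the profile (v_i/2, b_{-i}). Then for each i, u_i^{dev} ≥ α_i γ_i v_i/2 − α_i γ_{π(i)}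 v_{π(i)}, and consequently Σ_{i=1}^n u_i^{dev} ≥ (1/2)·Σ_{i=1}^n α_i γ_i v_i − Σ_{i=1}^n α_i γ_{π(i)} v_{π(i)}, i.e., the GSP auction game is (1/2, 1)-semi-smooth. -/
/-- A GSP allocation for quality factors `γ` and bids `b`: a permutation `π`
of the slots (π k = advertiser in slot k) sorting effective bids in
decreasing order. -/
def IsGSPAlloc {n : ℕ} (γ b : Fin n → ℝ) (π : Equiv.Perm (Fin n)) : Prop :=
  ∀ i j : Fin n, i ≤ j → γ (π j) * b (π j) ≤ γ (π i) * b (π i)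

/-- The effective bid of the occupant of the slot just below slot `k`
(0 if `k` is the last slot). -/
def nextEffBid {n : ℕ} (γ b : Fin n → ℝ) (π : Equiv.Perm (Fin n))
    (k : Fin n) : ℝ :=
  if h : (k : ℕ) + 1 < n then γ (π ⟨(k : ℕ) + 1, h⟩) * b (π ⟨(k : ℕ) + 1, h⟩)
  else 0

/-- Utility of advertiser `i` in the GSP auction with click-through-rates `α`,
quality factors `γ`, valuations `v`, bids `b` and allocation `π`:
u_i = α_{σ(i)} (γ_i v_i − γ_{π(σ(i)+1)} b_{π(σ(i)+1)}), σ = π⁻¹. -/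
def gspUtility {n : ℕ} (α γ v b : Fin n → ℝ) (π : Equiv.Perm (Fin n))
    (i : Fin n) : ℝ :=
  α (π.symm i) * (γ i * v i - nextEffBid γ b π (π.symm i))

/-- the GSP auction game is (1/2, 1)-semi-smooth. With players
sorted by decreasing effective value γ_i v_i, for any conservative bid profile
b with GSP allocation π, the utility of each player i when unilaterally
deviating to the bid v_i/2 (under any GSP allocation π' i of the deviated
profile) is at least α_i γ_i v_i/2 − α_i γ_{π(i)} v_{π(i)}; summing,
Σ_i u_i^{dev} ≥ (1/2)·Σ_i α_i γ_i v_i − Σ_i α_i γ_{π(i)} v_{π(i)}. -/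
theorem gsp_semi_smooth_half_one {n : ℕ} (α γ v b : Fin n → ℝ)
    (hα : ∀ i j : Fin n, i ≤ j → α j ≤ α i) (hα0 : ∀ i, 0 ≤ α i)
    (hγ : ∀ i, 0 < γ i) (hv0 : ∀ i, 0 ≤ v i)
    (hsort : ∀ i j : Fin n, i ≤ j → γ j * v j ≤ γ i * v i)
    (hcons : ∀ i, 0 ≤ b i ∧ b i ≤ v i)
    (π : Equiv.Perm (Fin n)) (hπ : IsGSPAlloc γ b π)
    (π' : Fin n → Equiv.Perm (Fin n))
    (hπ' : ∀ i, IsGSPAlloc γ (Function.update b i (v i / 2)) (π' i)) :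
    (∀ i, α i * (γ i * v i) / 2 - α i * (γ (π i) * v (π i)) ≤
      gspUtility α γ v (Function.update b i (v i / 2)) (π' i) i) ∧
    (1 / 2) * (∑ i, α i * (γ i * v i)) - ∑ i, α i * (γ (π i) * v (π i)) ≤
      ∑ i, gspUtility α γ v (Function.update b i (v i / 2)) (π' i) i := by
  have key : ∀ i, α i * (γ i * v i) / 2 - α i * (γ (π i) * v (π i)) ≤
      gspUtility α γ v (Function.update b i (v i / 2)) (π' i) i := by
    intro i
    have hγv0 : 0 ≤ γ i * v i := mul_nonneg (hγ i).le (hv0 i)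
    set s : Fin n := (π' i).symm i with hs
    have hPs : (π' i) s = i := (π' i).apply_symm_apply i
    -- the price paid by i after deviation is at most γ i * v i / 2
    have hp : nextEffBid γ (Function.update b i (v i / 2)) (π' i) s ≤ γ i * v i / 2 := by
      unfold nextEffBid
      split
      · next h =>
        have h2 := hπ' i s ⟨(s:ℕ) + 1, h⟩ (by simp [Fin.le_def])
        rw [hPs, Function.update_self] at h2
        calc γ ((π' i) ⟨(s:ℕ)+1, h⟩) *
              Function.update b i (v i / 2) ((π' i) ⟨(s:ℕ)+1, h⟩)
            ≤ γ i * (v i / 2) := h2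
          _ = γ i * v i / 2 := by ring
      · linarith
    have hu : α s * (γ i * v i / 2) ≤
        gspUtility α γ v (Function.update b i (v i / 2)) (π' i) i := by
      unfold gspUtility
      rw [← hs]
      have h1 : γ i * v i / 2 ≤
          γ i * v i - nextEffBid γ (Function.update b i (v i / 2)) (π' i) s := by
        linarith
      exact mul_le_mul_of_nonneg_left h1 (hα0 s)
    rcases le_or_gt s i with hsi | his
    · -- i gets a slot at least as good as i : use monotonicity of α
      have h1 : α i * (γ i * v i / 2) ≤ α s * (γ i * v i / 2) :=
        mul_le_mul_of_nonneg_right (hα s i hsi) (by linarith)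
      have h2 : 0 ≤ α i * (γ (π i) * v (π i)) :=
        mul_nonneg (hα0 i) (mul_nonneg (hγ _).le (hv0 _))
      nlinarith [hu]
    · -- i gets a worse slot: slot i in π has effective bid ≥ γ i * v i / 2
      have hkey : γ i * v i / 2 ≤ γ (π i) * b (π i) := by
        by_contra hlt
        push_neg at hlt
        have hsub : (Finset.Iio s).image (π' i) ⊆ (Finset.Iio i).image π := by
          intro j hj
          obtain ⟨k, hk, rfl⟩ := Finset.mem_image.mp hj
          have hks : k < s := Finset.mem_Iio.mp hk
          have hki : (π' i) k ≠ i := by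
            intro h
            have : k = s := (π' i).injective (h.trans hPs.symm)
            exact absurd this hks.ne
          have hTb : γ i * v i / 2 ≤ γ ((π' i) k) * b ((π' i) k) := by
            have h2 := hπ' i k s hks.le
            rw [hPs, Function.update_self, Function.update_of_ne hki] at h2
            linarith
          refine Finset.mem_image.mpr ⟨π.symm ((π' i) k), Finset.mem_Iio.mpr ?_,
            π.apply_symm_apply _⟩
          by_contra hge
          push_neg at hge
          have h3 := hπ i (π.symm ((π' i) k)) hge
          rw [π.apply_symm_apply] at h3
          linarith
        have hc1 : ((Finset.Iio s).image (π' i)).card = (s:ℕ) := by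
          rw [Finset.card_image_of_injective _ (π' i).injective, Fin.card_Iio]
        have hc2 : ((Finset.Iio i).image π).card = (i:ℕ) := by
          rw [Finset.card_image_of_injective _ π.injective, Fin.card_Iio]
        have hle := Finset.card_le_card hsub
        rw [hc1, hc2] at hle
        exact absurd hle (not_le.mpr his)
      have hv' : γ i * v i / 2 ≤ γ (π i) * v (π i) :=
        hkey.trans (mul_le_mul_of_nonneg_left (hcons (π i)).2 (hγ _).le)
      have h1 : α i * (γ i * v i / 2) ≤ α i * (γ (π i) * v (π i)) :=
        mul_le_mul_of_nonneg_left hv' (hα0 i)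
      have hu0 : (0:ℝ) ≤ gspUtility α γ v (Function.update b i (v i / 2)) (π' i) i :=
        le_trans (mul_nonneg (hα0 s) (by linarith)) hu
      nlinarith
  refine ⟨key, ?_⟩
  have h : (∑ i, (α i * (γ i * v i) / 2 - α i * (γ (π i) * v (π i)))) ≤
      ∑ i, gspUtility α γ v (Function.update b i (v i / 2)) (π' i) i :=
    Finset.sum_le_sum (fun i _ => key i)
  have heq : ∑ i, (α i * (γ i * v i) / 2 - α i * (γ (π i) * v (π i))) =
      (1 / 2) * (∑ i, α i * (γ i * v i)) - ∑ i, α i * (γ (π i) * v (π i)) := by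
    rw [Finset.sum_sub_distrib, Finset.mul_sum]
    congr 1
    exact Finset.sum_congr rfl (fun i _ => by ring)
  rw [← heq]
  exact h
end

section
/- Consider a full-information GSP auction with click-through-rates α_1 ≥ … ≥ α_n ≥ 0 and valuations v_1, …, v_n ≥ 0 (all quality factors equal 1). Let b be a conservative bid profile (0 ≤ b_i ≤ v_i for all i) and π a GSP allocation for b (a permutation with b_{π(1)} ≥ … ≥ b_{π(n)}). Suppose b is a pure Nash equilibrium robust to tie-breaking: for every advertiser a, every deviation b'_a ∈ [0, v_a], and every GSP allocation π' of the profile (b'_a, b_{-a}), the utility of a under (b, π) is at least her utility under ((b'_a, b_{-a}), π'). Then π is weakly feasible: α_j v_{π(j)} ≥ α_i (v_{π(j)} − v_{π(i)}) for all slots i, j ∈ {1,…,n}. -/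
/-- A GSP allocation for bids `b` in a full-information auction (quality
factors all 1): a permutation `π` of the slots sorting bids decreasingly. -/
def IsGSPAllocFI {n : ℕ} (b : Fin n → ℝ) (π : Equiv.Perm (Fin n)) : Prop :=
  ∀ i j : Fin n, i ≤ j → b (π j) ≤ b (π i)

/-- The bid of the occupant of the slot just below slot `k`
(0 if `k` is the last slot). -/
def nextBidFI {n : ℕ} (b : Fin n → ℝ) (π : Equiv.Perm (Fin n))
    (k : Fin n) : ℝ :=
  if h : (k : ℕ) + 1 < n then b (π ⟨(k : ℕ) + 1, h⟩) else 0

/-- Utility of advertiser `i`: u_i = α_{σ(i)} (v_i − b_{π(σ(i)+1)}),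
where σ = π⁻¹ and b_{π(n+1)} = 0 by convention. -/
def gspUtilityFI {n : ℕ} (α v b : Fin n → ℝ) (π : Equiv.Perm (Fin n))
    (i : Fin n) : ℝ :=
  α (π.symm i) * (v i - nextBidFI b π (π.symm i))

namespace GSPAux

/-- forward cycle map: `i ↦ j`, `k ↦ k-1` for `i < k ≤ j`, identity elsewhere. -/
def shiftF (i j m : ℕ) : ℕ :=
  if m < i then m else if m ≤ j then (if m = i then j else m - 1) else m

/-- inverse of `shiftF`. -/
def shiftG (i j m : ℕ) : ℕ :=
  if m < i then m else if m ≤ j then (if m = j then i else m + 1) else m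

/-- "payment index" map: `k ↦ k` for `k ≤ i`, `k ↦ k-1` for `i < k ≤ j`, identity above. -/
def shiftM (i j m : ℕ) : ℕ :=
  if m ≤ i then m else if m ≤ j then m - 1 else m

lemma shiftF_lt {n i j m : ℕ} (hj : j < n) (hm : m < n) : shiftF i j m < n := by
  unfold shiftF; split_ifs <;> omega

lemma shiftG_lt {n i j m : ℕ} (hij : i < j) (hj : j < n) (hm : m < n) :
    shiftG i j m < n := by
  unfold shiftG; split_ifs <;> omega

lemma shiftM_lt {n i j m : ℕ} (hm : m < n) : shiftM i j m < n := by
  unfold shiftM; split_ifs <;> omega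

lemma shiftGF {i j : ℕ} (hij : i < j) (m : ℕ) : shiftG i j (shiftF i j m) = m := by
  unfold shiftF shiftG; split_ifs <;> omega

lemma shiftFG {i j : ℕ} (hij : i < j) (m : ℕ) : shiftF i j (shiftG i j m) = m := by
  unfold shiftF shiftG; split_ifs <;> omega

/-- The cycle `(i  i+1  …  j)` read as: slot `i` gets the old occupant of `j`,
slots `i+1..j` get the old occupants of `i..j-1`. -/
def shiftPerm (n i j : ℕ) (hij : i < j) (hj : j < n) : Equiv.Perm (Fin n) where
  toFun k := ⟨shiftF i j k, shiftF_lt hj k.isLt⟩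
  invFun k := ⟨shiftG i j k, shiftG_lt hij hj k.isLt⟩
  left_inv k := Fin.ext (shiftGF hij k)
  right_inv k := Fin.ext (shiftFG hij k)

end GSPAux

/-- in a full-information GSP auction, any conservative pure
Nash equilibrium that is robust to tie-breaking induces a weakly feasible
allocation: α_j v_{π(j)} ≥ α_i (v_{π(j)} − v_{π(i)}) for all slots i, j. -/
theorem gsp_nash_implies_weakly_feasible {n : ℕ} (α v b : Fin n → ℝ)
    (hα : ∀ i j : Fin n, i ≤ j → α j ≤ α i) (hα0 : ∀ i, 0 ≤ α i)
    (hv0 : ∀ i, 0 ≤ v i)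
    (hcons : ∀ i, 0 ≤ b i ∧ b i ≤ v i)
    (π : Equiv.Perm (Fin n)) (hπ : IsGSPAllocFI b π)
    (hNE : ∀ (a : Fin n) (b' : ℝ), 0 ≤ b' → b' ≤ v a →
      ∀ π' : Equiv.Perm (Fin n), IsGSPAllocFI (Function.update b a b') π' →
      gspUtilityFI α v (Function.update b a b') π' a ≤ gspUtilityFI α v b π a) :
    ∀ i j : Fin n, α i * (v (π j) - v (π i)) ≤ α j * v (π j) := by
  intro i j
  rcases le_or_gt (v (π j)) (v (π i)) with hv | hv
  · have h1 : α i * (v (π j) - v (π i)) ≤ 0 :=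
      mul_nonpos_of_nonneg_of_nonpos (hα0 i) (by linarith)
    have h2 : 0 ≤ α j * v (π j) := mul_nonneg (hα0 j) (hv0 _)
    linarith
  rcases le_or_gt j i with hji | hij
  · have h1 : α i * (v (π j) - v (π i)) ≤ α i * v (π j) := by
      have h3 := hv0 (π i)
      have h4 := hα0 i
      nlinarith
    have h2 : α i * v (π j) ≤ α j * v (π j) :=
      mul_le_mul_of_nonneg_right (hα j i hji) (hv0 _)
    linarith
  -- main case: i < j and v (π i) < v (π j)
  have hijn : (i : ℕ) < (j : ℕ) := hij
  have hjn : (j : ℕ) < n := j.isLt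
  have hbi_le : b (π i) ≤ v (π i) := (hcons (π i)).2
  have hbi0 : 0 ≤ b (π i) := (hcons (π i)).1
  have hb'le : b (π i) ≤ v (π j) := le_of_lt (lt_of_le_of_lt hbi_le hv)
  set a := π j with ha
  set σ := GSPAux.shiftPerm n i j hijn hjn with hσ
  set π' := σ.trans π with hπ'
  set b' := Function.update b a (b (π i)) with hb'
  have hπ'app : ∀ k : Fin n,
      π' k = π ⟨GSPAux.shiftF i j k, GSPAux.shiftF_lt hjn k.isLt⟩ :=
    fun k => rfl
  have hne : ∀ k : Fin n, (k : ℕ) ≠ (j : ℕ) → b' (π k) = b (π k) := by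
    intro k hk
    apply Function.update_of_ne
    intro h
    exact hk (congrArg Fin.val (π.injective h))
  have key : ∀ k : Fin n,
      b' (π' k) = b (π ⟨GSPAux.shiftM i j k, GSPAux.shiftM_lt k.isLt⟩) := by
    intro k
    rw [hπ'app]
    rcases lt_trichotomy (k : ℕ) (i : ℕ) with h | h | h
    · have hF : GSPAux.shiftF i j k = (k : ℕ) := by
        unfold GSPAux.shiftF; split_ifs <;> omega
      have hM : GSPAux.shiftM i j k = (k : ℕ) := by
        unfold GSPAux.shiftM; split_ifs <;> omega
      have e1 : (⟨GSPAux.shiftF i j k, GSPAux.shiftF_lt hjn k.isLt⟩ : Fin n) = k :=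
        Fin.ext hF
      have e2 : (⟨GSPAux.shiftM i j k, GSPAux.shiftM_lt k.isLt⟩ : Fin n) = k :=
        Fin.ext hM
      rw [e1, e2]
      exact hne k (by omega)
    · have hF : GSPAux.shiftF i j k = (j : ℕ) := by
        unfold GSPAux.shiftF; split_ifs <;> omega
      have hM : GSPAux.shiftM i j k = (i : ℕ) := by
        unfold GSPAux.shiftM; split_ifs <;> omega
      have e1 : (⟨GSPAux.shiftF i j k, GSPAux.shiftF_lt hjn k.isLt⟩ : Fin n) = j :=
        Fin.ext hF
      have e2 : (⟨GSPAux.shiftM i j k, GSPAux.shiftM_lt k.isLt⟩ : Fin n) = i :=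
        Fin.ext hM
      rw [e1, e2, ← ha, hb']
      exact Function.update_self a (b (π i)) b
    · have hFM : GSPAux.shiftF i j k = GSPAux.shiftM i j k ∧
          GSPAux.shiftM i j k ≠ (j : ℕ) := by
        unfold GSPAux.shiftF GSPAux.shiftM; split_ifs <;> omega
      have e1 : (⟨GSPAux.shiftF i j k, GSPAux.shiftF_lt hjn k.isLt⟩ : Fin n) =
          ⟨GSPAux.shiftM i j k, GSPAux.shiftM_lt k.isLt⟩ := Fin.ext hFM.1
      rw [e1]
      exact hne _ hFM.2
  have hπ'GSP : IsGSPAllocFI b' π' := by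
    intro k l hkl
    rw [key k, key l]
    apply hπ
    have hkln : (k : ℕ) ≤ (l : ℕ) := hkl
    show (GSPAux.shiftM i j k : ℕ) ≤ GSPAux.shiftM i j l
    unfold GSPAux.shiftM; split_ifs <;> omega
  have hsymm : π'.symm a = i := by
    rw [Equiv.symm_apply_eq, hπ'app]
    have hF : GSPAux.shiftF i j i = (j : ℕ) := by
      unfold GSPAux.shiftF; split_ifs <;> omega
    have e1 : (⟨GSPAux.shiftF i j i, GSPAux.shiftF_lt hjn i.isLt⟩ : Fin n) = j :=
      Fin.ext hF
    rw [e1, ha]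
  have hi1 : (i : ℕ) + 1 < n := by omega
  have hnb' : nextBidFI b' π' i = b (π i) := by
    rw [nextBidFI, dif_pos hi1, key ⟨(i : ℕ) + 1, hi1⟩]
    have hM : GSPAux.shiftM i j ((i : ℕ) + 1) = (i : ℕ) := by
      unfold GSPAux.shiftM; split_ifs <;> omega
    exact congrArg b (congrArg π (Fin.ext hM))
  have hdev : gspUtilityFI α v b' π' a = α i * (v a - b (π i)) := by
    rw [gspUtilityFI, hsymm, hnb']
  have hNEa := hNE a (b (π i)) hbi0 hb'le π' (hb' ▸ hπ'GSP)
  rw [← hb', hdev] at hNEa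
  have hnb0 : 0 ≤ nextBidFI b π (π.symm a) := by
    rw [nextBidFI]
    split
    · exact (hcons _).1
    · exact le_refl 0
  have hσa : π.symm a = j := π.symm_apply_apply j
  have hu_le : gspUtilityFI α v b π a ≤ α j * v a := by
    rw [gspUtilityFI, hσa]
    rw [hσa] at hnb0
    have h4 := hα0 j
    nlinarith
  have h1 : α i * (v a - v (π i)) ≤ α i * (v a - b (π i)) :=
    mul_le_mul_of_nonneg_left (by linarith) (hα0 i)
  rw [ha] at *
  linarith
end

section
/- Let N be a finite set of players, each with a nonempty strategy set S_i, utilities U_i : Π_j S_j → ℝ_{≥0}, a social welfare function SW : Π_j S_j → ℝ, a real number SW*, constants β, δ > 0, and ε ∈ [0, 1). Suppose: (a) Σ_{i∈N} U_i(s) ≤ SW(s) for every strategy profile s; and (b) there exists a profile s' = (s'_i) such that Σ_{i∈N} U_i(s'_i, s_{-i}) ≥ β·SW* − δ·SW(s) for every profile s. Then for every ε-Nash equilibrium s (i.e., U_i(s) ≥ (1 − ε)·U_i(t_i, s_{-i}) for all i and all t_i ∈ S_i), one has β·SW* ≤ ((1 − ε)^{-1} + δ)·SW(s). -/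
theorem sum_update_le_inv_mul_sum {N 𝕜 : Type*} [Fintype N] [DecidableEq N]
    [Field 𝕜] [LinearOrder 𝕜] [IsStrictOrderedRing 𝕜] {S : N → Type*}
    (U : N → (∀ j, S j) → 𝕜) {c : 𝕜} (hc : 0 < c) (s t : ∀ j, S j)
    (hs : ∀ (i : N) (ti : S i), c * U i (Function.update s i ti) ≤ U i s) :
    ∑ i, U i (Function.update s i (t i)) ≤ c⁻¹ * ∑ i, U i s := by
  rw [Finset.mul_sum]
  exact Finset.sum_le_sum fun i _ => (le_inv_mul_iff₀ hc).mpr (hs i (t i))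

theorem semi_smooth_eps_nash_poa_general {N : Type*} [Fintype N] [DecidableEq N]
    {S : N → Type*}
    (U : ∀ _ : N, (∀ j, S j) → ℝ) (SW : (∀ j, S j) → ℝ)
    (SWstar β δ ε : ℝ) (hε1 : ε < 1)
    (hsum : ∀ s, ∑ i, U i s ≤ SW s)
    (s' : ∀ j, S j)
    (hsmooth : ∀ s : ∀ j, S j,
      β * SWstar - δ * SW s ≤ ∑ i, U i (Function.update s i (s' i)))
    (s : ∀ j, S j)
    (hNE : ∀ (i : N) (t : S i), (1 - ε) * U i (Function.update s i t) ≤ U i s) :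
    β * SWstar ≤ ((1 - ε)⁻¹ + δ) * SW s := by
  have hε : 0 < 1 - ε := sub_pos.mpr hε1
  calc β * SWstar ≤ ∑ i, U i (Function.update s i (s' i)) + δ * SW s := by
        linarith [hsmooth s]
    _ ≤ (1 - ε)⁻¹ * ∑ i, U i s + δ * SW s := by
        gcongr; exact sum_update_le_inv_mul_sum U hε s s' hNE
    _ ≤ (1 - ε)⁻¹ * SW s + δ * SW s := by
        have := inv_pos.mpr hε
        gcongr; exact hsum s
    _ = ((1 - ε)⁻¹ + δ) * SW s := by ring

/-- graceful degradation of semi-smoothness bounds under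
approximate rationality. In a finite game with nonnegative utilities whose
social welfare is at least the sum of utilities, if a profile s' witnesses the
semi-smoothness-type inequality Σ_i U_i(s'_i, s_{-i}) ≥ β·SW* − δ·SW(s) for
all s, then every ε-Nash equilibrium s (multiplicative notion) satisfies
β·SW* ≤ ((1 − ε)⁻¹ + δ)·SW(s). -/
theorem semi_smooth_eps_nash_poa {N : Type*} [Fintype N] [DecidableEq N]
    {S : N → Type*} [∀ i, Nonempty (S i)]
    (U : ∀ _ : N, (∀ j, S j) → ℝ) (SW : (∀ j, S j) → ℝ)
    (SWstar β δ ε : ℝ) (hβ : 0 < β) (hδ : 0 < δ) (hε0 : 0 ≤ ε) (hε1 : ε < 1)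
    (hU0 : ∀ i s, 0 ≤ U i s)
    (hsum : ∀ s, ∑ i, U i s ≤ SW s)
    (s' : ∀ j, S j)
    (hsmooth : ∀ s : ∀ j, S j,
      β * SWstar - δ * SW s ≤ ∑ i, U i (Function.update s i (s' i)))
    (s : ∀ j, S j)
    (hNE : ∀ (i : N) (t : S i), (1 - ε) * U i (Function.update s i t) ≤ U i s) :
    β * SWstar ≤ ((1 - ε)⁻¹ + δ) * SW s :=
  semi_smooth_eps_nash_poa_general U SW SWstar β δ ε hε1 hsum s' hsmooth s hNE
end
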